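/- Let G be a finite simple graph, π a vertex clique-partition of G, e_π a clique cluster-partition based on π, G^{md} any multiple clique cluster-whiskered graph built from this data, and v any vertex of G. Then there exist a vertex clique-partition π_2 of G \ N_G[v] and a clique cluster-partition e_{π_2} based on π_2 such that the induced subgraph G^{md} \ N_{G^{md}}[v] is isomorphic to the disjoint union of some multiple clique cluster-whiskered graph (G \ N_G[v])^{md} built on G \ N_G[v] from π_2 and e_{π_2} and a (possibly empty) vertex decomposable graph. -/

import Mathlib

namespace Paper

variable {V : Type*}

/-- `S` is an independent vertex set of the graph `H` (equivalently, of any induced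
subgraph of `H` containing `S`): its vertices are pairwise non-adjacent. -/
def IndepOn (H : SimpleGraph V) (S : Set V) : Prop :=
  ∀ x ∈ S, ∀ y ∈ S, ¬ H.Adj x y

/-- `S` is a maximal independent vertex set of the graph `H`. -/
def MaxIndep (H : SimpleGraph V) (S : Set V) : Prop :=
  IndepOn H S ∧ ∀ T : Set V, IndepOn H T → S ⊆ T → T = S

/-- Vertex decomposability of the induced subgraph of `H` on the vertex set `s`:
either the induced subgraph has no edges, or there is a shedding vertex `x ∈ s`, i.e.
a vertex such that (1) the induced subgraphs on `s` minus the closed neighbourhood of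
`x` and on `s \ {x}` are vertex decomposable, and (2) every independent set `S` of the
induced subgraph on `s` minus the closed neighbourhood of `x` extends by some
neighbour `y` of `x` in `s` to an independent set `S ∪ {y}` of the induced subgraph
on `s \ {x}`. -/
inductive VD (H : SimpleGraph V) : Set V → Prop
  | noEdges (s : Set V) (h : ∀ x ∈ s, ∀ y ∈ s, ¬ H.Adj x y) : VD H s
  | shed (s : Set V) (x : V) (hx : x ∈ s)
      (hlink : VD H {y ∈ s | y ≠ x ∧ ¬ H.Adj x y})
      (hdel : VD H (s \ {x}))
      (hshed : ∀ S ⊆ {y ∈ s | y ≠ x ∧ ¬ H.Adj x y}, IndepOn H S →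
        ∃ y ∈ s, H.Adj x y ∧ IndepOn H (S ∪ {y})) : VD H s

/-- The data exhibiting `H`, restricted to the vertex set `T`, as a multiple clique
cluster-whiskered graph `G^{md}` of type `(d, r)` over the base graph `G` (the induced
subgraph of `H` on `Vg`), built from a vertex clique-partition `π = {W_1, …, W_d}`,
a clique cluster-partition `e_π = {U_1, …, U_s}` based on `π`, and added vertex
sets `A_1, …, A_d`, `B_1, …, B_r` inducing vertex decomposable subgraphs. -/
structure MccWhiskered (H : SimpleGraph V) (T : Set V) (d s r : ℕ) where
  hrs : r ≤ s
  /-- the vertex set of the base graph `G`; the edges of `G` are the edges of `H`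
  between vertices of `Vg`, i.e. `G` is the induced subgraph of `H` on `Vg`. -/
  Vg : Set V
  /-- the vertex clique-partition `π = {W_1, …, W_d}` of `G` -/
  W : Fin d → Set V
  /-- the clique cluster-partition `e_π = {U_1, …, U_s}` based on `π` -/
  U : Fin s → Set V
  W_ne : ∀ i, (W i).Nonempty
  W_sub : ∀ i, W i ⊆ Vg
  W_disj : ∀ i j, i ≠ j → Disjoint (W i) (W j)
  W_cover : Vg ⊆ ⋃ i, W i
  W_clique : ∀ i, ∀ x ∈ W i, ∀ y ∈ W i, x ≠ y → H.Adj x y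
  U_ne : ∀ j, (U j).Nonempty
  U_sub : ∀ j, U j ⊆ Vg
  U_disj : ∀ j k, j ≠ k → Disjoint (U j) (U k)
  U_cover : Vg ⊆ ⋃ j, U j
  /-- each clique of `π` is contained in some cluster -/
  W_in_U : ∀ i, ∃ j, W i ⊆ U j
  /-- two distinct cliques of `π` lying in a common cluster have no edge between them -/
  cluster_indep : ∀ i i', i ≠ i' → ∀ j, W i ⊆ U j → W i' ⊆ U j →
    ∀ x ∈ W i, ∀ y ∈ W i', ¬ H.Adj x y
  /-- the first `r` clusters are unions of at least two cliques of `π` -/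
  U_multi : ∀ j : Fin r, ∃ i i' : Fin d, i ≠ i' ∧
    W i ⊆ U (Fin.castLE hrs j) ∧ W i' ⊆ U (Fin.castLE hrs j)
  /-- the remaining `s - r` clusters each coincide with a single clique of `π` -/
  U_single : ∀ j : Fin s, r ≤ (j : ℕ) → ∃ i, U j = W i
  /-- the added whisker sets `A_1, …, A_d` -/
  A : Fin d → Set V
  /-- the added whisker sets `B_1, …, B_r` -/
  B : Fin r → Set V
  A_ne : ∀ i, (A i).Nonempty
  B_ne : ∀ j, (B j).Nonempty
  A_disj_Vg : ∀ i, Disjoint (A i) Vg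
  B_disj_Vg : ∀ j, Disjoint (B j) Vg
  A_disj : ∀ i i', i ≠ i' → Disjoint (A i) (A i')
  B_disj : ∀ j j', j ≠ j' → Disjoint (B j) (B j')
  AB_disj : ∀ i j, Disjoint (A i) (B j)
  /-- the vertex set of `G^{md}` -/
  total : T = Vg ∪ (⋃ i, A i) ∪ (⋃ j, B j)
  /-- each vertex of `A i` is adjacent to every vertex of `W i` -/
  A_adj : ∀ i, ∀ a ∈ A i, ∀ w ∈ W i, H.Adj a w
  /-- each vertex of `B j` is adjacent to every vertex of `U j` -/
  B_adj : ∀ j, ∀ b ∈ B j, ∀ u ∈ U (Fin.castLE hrs j), H.Adj b u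
  /-- besides the edges of `G`, the whisker edges, and edges inside the sets
  `A i` and `B j`, there are no other edges in `G^{md}` -/
  no_other_edges : ∀ x ∈ T, ∀ y ∈ T, H.Adj x y →
    (x ∈ Vg ∧ y ∈ Vg) ∨
    (∃ i, (x ∈ A i ∧ y ∈ W i) ∨ (y ∈ A i ∧ x ∈ W i) ∨ (x ∈ A i ∧ y ∈ A i)) ∨
    (∃ j, (x ∈ B j ∧ y ∈ U (Fin.castLE hrs j)) ∨
          (y ∈ B j ∧ x ∈ U (Fin.castLE hrs j)) ∨ (x ∈ B j ∧ y ∈ B j))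
  /-- the induced subgraph on each `A i` is vertex decomposable -/
  A_vd : ∀ i, VD H (A i)
  /-- the induced subgraph on each `B j` is vertex decomposable -/
  B_vd : ∀ j, VD H (B j)

lemma vd_union_aux (H : SimpleGraph V) {P Q : Set V} (hQ : VD H Q) :
    (∀ x ∈ P, ∀ y ∈ P, ¬ H.Adj x y) → Disjoint P Q →
    (∀ x ∈ P, ∀ y ∈ Q, ¬ H.Adj x y) → VD H (P ∪ Q) := by
  induction hQ with
  | noEdges s h =>
    intro hP _ hE
    refine VD.noEdges _ ?_
    rintro x (hx | hx) y (hy | hy)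
    · exact hP x hx y hy
    · exact hE x hx y hy
    · exact fun h' => hE y hy x hx h'.symm
    · exact h x hx y hy
  | shed s x hx hlink hdel hshed IHlink IHdel =>
    intro hP hd hE
    have hxP : x ∉ P := fun h => (Set.disjoint_left.mp hd h) hx
    have e1 : {y ∈ P ∪ s | y ≠ x ∧ ¬ H.Adj x y} = P ∪ {y ∈ s | y ≠ x ∧ ¬ H.Adj x y} := by
      ext z
      simp only [Set.mem_setOf_eq, Set.mem_union]
      constructor
      · rintro ⟨hz | hz, h2⟩
        · exact Or.inl hz
        · exact Or.inr ⟨hz, h2⟩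
      · rintro (hz | ⟨hz, h2⟩)
        · exact ⟨Or.inl hz, fun hzx => hxP (hzx ▸ hz), fun hadj => hE z hz x hx hadj.symm⟩
        · exact ⟨Or.inr hz, h2⟩
    have e2 : (P ∪ s) \ {x} = P ∪ (s \ {x}) := by
      rw [Set.union_diff_distrib, Set.diff_singleton_eq_self hxP]
    apply VD.shed _ x (Or.inr hx)
    · rw [e1]
      exact IHlink hP (hd.mono_right (fun z hz => hz.1))
        (fun a ha b hb => hE a ha b hb.1)
    · rw [e2]
      exact IHdel hP (hd.mono_right Set.diff_subset)
        (fun a ha b hb => hE a ha b hb.1)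
    · intro S hS hSind
      have hS' : {z ∈ S | z ∈ s} ⊆ {y ∈ s | y ≠ x ∧ ¬ H.Adj x y} := by
        rintro z ⟨hzS, hzs⟩
        obtain ⟨-, h2⟩ := hS hzS
        exact ⟨hzs, h2⟩
      obtain ⟨y, hy, hadj, hind⟩ := hshed {z ∈ S | z ∈ s} hS'
        (fun a ha b hb => hSind a ha.1 b hb.1)
      have hyQ : ∀ a ∈ S, ¬ H.Adj a y := by
        intro a ha hadj'
        rcases (hS ha).1 with haP | has
        · exact hE a haP y hy hadj'
        · exact hind a (Or.inl ⟨ha, has⟩) y (Or.inr rfl) hadj'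
      refine ⟨y, Or.inr hy, hadj, ?_⟩
      rintro a (ha | ha) b (hb | hb)
      · exact hSind a ha b hb
      · rw [Set.mem_singleton_iff] at hb; subst hb; exact hyQ a ha
      · rw [Set.mem_singleton_iff] at ha; subst ha
        exact fun h' => hyQ b hb h'.symm
      · rw [Set.mem_singleton_iff] at ha hb; subst ha; subst hb
        exact H.irrefl

lemma vd_union (H : SimpleGraph V) {P Q : Set V} (hP : VD H P) (hQ : VD H Q) :
    Disjoint P Q → (∀ x ∈ P, ∀ y ∈ Q, ¬ H.Adj x y) → VD H (P ∪ Q) := by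
  induction hP with
  | noEdges s h =>
    intro hd hE
    exact vd_union_aux H hQ h hd hE
  | shed s x hx hlink hdel hshed IHlink IHdel =>
    intro hd hE
    have hxQ : x ∉ Q := fun h => (Set.disjoint_left.mp hd hx) h
    have e1 : {y ∈ s ∪ Q | y ≠ x ∧ ¬ H.Adj x y} = {y ∈ s | y ≠ x ∧ ¬ H.Adj x y} ∪ Q := by
      ext z
      simp only [Set.mem_setOf_eq, Set.mem_union]
      constructor
      · rintro ⟨hz | hz, h2⟩
        · exact Or.inl ⟨hz, h2⟩
        · exact Or.inr hz
      · rintro (⟨hz, h2⟩ | hz)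
        · exact ⟨Or.inl hz, h2⟩
        · exact ⟨Or.inr hz, fun hzx => hxQ (hzx ▸ hz), fun hadj => hE x hx z hz hadj⟩
    have e2 : (s ∪ Q) \ {x} = (s \ {x}) ∪ Q := by
      rw [Set.union_diff_distrib, Set.diff_singleton_eq_self hxQ]
    apply VD.shed _ x (Or.inl hx)
    · rw [e1]
      exact IHlink (hd.mono_left (fun z hz => hz.1))
        (fun a ha b hb => hE a ha.1 b hb)
    · rw [e2]
      exact IHdel (hd.mono_left Set.diff_subset)
        (fun a ha b hb => hE a ha.1 b hb)
    · intro S hS hSind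
      have hS' : {z ∈ S | z ∈ s} ⊆ {y ∈ s | y ≠ x ∧ ¬ H.Adj x y} := by
        rintro z ⟨hzS, hzs⟩
        obtain ⟨-, h2⟩ := hS hzS
        exact ⟨hzs, h2⟩
      obtain ⟨y, hy, hadj, hind⟩ := hshed {z ∈ S | z ∈ s} hS'
        (fun a ha b hb => hSind a ha.1 b hb.1)
      have hyQ : ∀ a ∈ S, ¬ H.Adj a y := by
        intro a ha hadj'
        rcases (hS ha).1 with has | haQ
        · exact hind a (Or.inl ⟨ha, has⟩) y (Or.inr rfl) hadj'
        · exact hE y hy a haQ hadj'.symm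
      refine ⟨y, Or.inl hy, hadj, ?_⟩
      rintro a (ha | ha) b (hb | hb)
      · exact hSind a ha b hb
      · rw [Set.mem_singleton_iff] at hb; subst hb; exact hyQ a ha
      · rw [Set.mem_singleton_iff] at ha; subst ha
        exact fun h' => hyQ b hb h'.symm
      · rw [Set.mem_singleton_iff] at ha hb; subst ha; subst hb
        exact H.irrefl

lemma vd_empty (H : SimpleGraph V) : VD H (∅ : Set V) :=
  VD.noEdges ∅ (by simp)

lemma vd_biUnion {ι : Type*} [DecidableEq ι] (H : SimpleGraph V) (t : Finset ι) (f : ι → Set V)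
    (hvd : ∀ i ∈ t, VD H (f i))
    (hdisj : ∀ i ∈ t, ∀ j ∈ t, i ≠ j → Disjoint (f i) (f j))
    (hE : ∀ i ∈ t, ∀ j ∈ t, i ≠ j → ∀ x ∈ f i, ∀ y ∈ f j, ¬ H.Adj x y) :
    VD H (⋃ i ∈ t, f i) := by
  induction t using Finset.induction_on with
  | empty => simpa using vd_empty H
  | insert _ _ hnot IH =>
    rename_i a t'
    rw [Finset.set_biUnion_insert]
    have hane : ∀ i ∈ t', a ≠ i := fun i hi h => hnot (h ▸ hi)
    apply vd_union H (hvd a (Finset.mem_insert_self a t'))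
    · exact IH (fun i hi => hvd i (Finset.mem_insert_of_mem hi))
        (fun i hi j hj hij => hdisj i (Finset.mem_insert_of_mem hi) j (Finset.mem_insert_of_mem hj) hij)
        (fun i hi j hj hij => hE i (Finset.mem_insert_of_mem hi) j (Finset.mem_insert_of_mem hj) hij)
    · refine Set.disjoint_left.mpr ?_
      intro x hx hx'
      rw [Set.mem_iUnion₂] at hx'
      obtain ⟨i, hi, hxi⟩ := hx'
      exact Set.disjoint_left.mp
        (hdisj a (Finset.mem_insert_self a t') i (Finset.mem_insert_of_mem hi) (hane i hi)) hx hxi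
    · intro x hx y hy
      rw [Set.mem_iUnion₂] at hy
      obtain ⟨i, hi, hyi⟩ := hy
      exact hE a (Finset.mem_insert_self a t') i (Finset.mem_insert_of_mem hi) (hane i hi) x hx y hyi

namespace MccWhiskered

variable {H : SimpleGraph V} {d s r : ℕ} (M : MccWhiskered H Set.univ d s r)

/-- The cluster containing `B j`. -/
def Uc (j : Fin r) : Set V := M.U (Fin.castLE M.hrs j)

lemma mem_cases (x : V) : x ∈ M.Vg ∨ (∃ i, x ∈ M.A i) ∨ (∃ j, x ∈ M.B j) := by
  have hx : x ∈ M.Vg ∪ (⋃ i, M.A i) ∪ ⋃ j, M.B j := by rw [← M.total]; trivial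
  rcases hx with (h | h) | h
  · exact Or.inl h
  · exact Or.inr (Or.inl (Set.mem_iUnion.mp h))
  · exact Or.inr (Or.inr (Set.mem_iUnion.mp h))

lemma A_not_Vg {i x} (hx : x ∈ M.A i) : x ∉ M.Vg :=
  fun h => Set.disjoint_left.mp (M.A_disj_Vg i) hx h

lemma B_not_Vg {j x} (hx : x ∈ M.B j) : x ∉ M.Vg :=
  fun h => Set.disjoint_left.mp (M.B_disj_Vg j) hx h

lemma A_not_B {i j x} (hx : x ∈ M.A i) : x ∉ M.B j :=
  fun h => Set.disjoint_left.mp (M.AB_disj i j) hx h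

lemma A_unique {i i' x} (hx : x ∈ M.A i) (hx' : x ∈ M.A i') : i = i' := by
  by_contra h
  exact Set.disjoint_left.mp (M.A_disj i i' h) hx hx'

lemma B_unique {j j' x} (hx : x ∈ M.B j) (hx' : x ∈ M.B j') : j = j' := by
  by_contra h
  exact Set.disjoint_left.mp (M.B_disj j j' h) hx hx'

lemma W_unique {i i' x} (hx : x ∈ M.W i) (hx' : x ∈ M.W i') : i = i' := by
  by_contra h
  exact Set.disjoint_left.mp (M.W_disj i i' h) hx hx'

lemma U_unique {j j' x} (hx : x ∈ M.U j) (hx' : x ∈ M.U j') : j = j' := by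
  by_contra h
  exact Set.disjoint_left.mp (M.U_disj j j' h) hx hx'

lemma W_subU_of_mem {i j x} (hx : x ∈ M.W i) (hx' : x ∈ M.U j) : M.W i ⊆ M.U j := by
  obtain ⟨k, hk⟩ := M.W_in_U i
  rwa [M.U_unique (hk hx) hx'] at hk

lemma U_eq_sUnion {j x} (hx : x ∈ M.U j) : ∃ i, x ∈ M.W i ∧ M.W i ⊆ M.U j := by
  have hxv : x ∈ M.Vg := M.U_sub j hx
  obtain ⟨i, hi⟩ := Set.mem_iUnion.mp (M.W_cover hxv)
  exact ⟨i, hi, M.W_subU_of_mem hi hx⟩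

lemma W_subU_unique {i j j'} (h : M.W i ⊆ M.U j) (h' : M.W i ⊆ M.U j') : j = j' := by
  obtain ⟨x, hx⟩ := M.W_ne i
  exact M.U_unique (h hx) (h' hx)

lemma edge_from_A {i x y} (hx : x ∈ M.A i) (hadj : H.Adj x y) :
    y ∈ M.W i ∨ y ∈ M.A i := by
  rcases M.no_other_edges x trivial y trivial hadj with ⟨hxv, -⟩ | ⟨k, hk⟩ | ⟨j, hj⟩
  · exact absurd hxv (M.A_not_Vg hx)
  · rcases hk with ⟨hxa, hyw⟩ | ⟨-, hxw⟩ | ⟨hxa, hya⟩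
    · exact Or.inl (M.A_unique hxa hx ▸ hyw)
    · exact absurd (M.W_sub k hxw) (M.A_not_Vg hx)
    · exact Or.inr (M.A_unique hxa hx ▸ hya)
  · rcases hj with ⟨hxb, -⟩ | ⟨-, hxu⟩ | ⟨hxb, -⟩
    · exact absurd hxb (M.A_not_B hx)
    · exact absurd (M.U_sub _ hxu) (M.A_not_Vg hx)
    · exact absurd hxb (M.A_not_B hx)

lemma edge_from_B {j x y} (hx : x ∈ M.B j) (hadj : H.Adj x y) :
    y ∈ M.Uc j ∨ y ∈ M.B j := by
  rcases M.no_other_edges x trivial y trivial hadj with ⟨hxv, -⟩ | ⟨k, hk⟩ | ⟨k, hk⟩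
  · exact absurd hxv (M.B_not_Vg hx)
  · rcases hk with ⟨hxa, -⟩ | ⟨hya, hxw⟩ | ⟨hxa, -⟩
    · exact absurd hx (M.A_not_B hxa)
    · exact absurd (M.W_sub k hxw) (M.B_not_Vg hx)
    · exact absurd hx (M.A_not_B hxa)
  · rcases hk with ⟨hxb, hyu⟩ | ⟨-, hxu⟩ | ⟨hxb, hyb⟩
    · exact Or.inl (by rw [← M.B_unique hxb hx]; exact hyu)
    · exact absurd (M.U_sub _ hxu) (M.B_not_Vg hx)
    · exact Or.inr (M.B_unique hxb hx ▸ hyb)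

lemma edge_from_Vg {x y} (hx : x ∈ M.Vg) (hadj : H.Adj x y) :
    y ∈ M.Vg ∨ (∃ i, x ∈ M.W i ∧ y ∈ M.A i) ∨ (∃ j, x ∈ M.Uc j ∧ y ∈ M.B j) := by
  rcases M.no_other_edges x trivial y trivial hadj with ⟨-, hyv⟩ | ⟨k, hk⟩ | ⟨k, hk⟩
  · exact Or.inl hyv
  · rcases hk with ⟨hxa, -⟩ | ⟨hya, hxw⟩ | ⟨hxa, -⟩
    · exact absurd hx (M.A_not_Vg hxa)
    · exact Or.inr (Or.inl ⟨k, hxw, hya⟩)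
    · exact absurd hx (M.A_not_Vg hxa)
  · rcases hk with ⟨hxb, -⟩ | ⟨hyb, hxu⟩ | ⟨hxb, -⟩
    · exact absurd hx (M.B_not_Vg hxb)
    · exact Or.inr (Or.inr ⟨k, hxu, hyb⟩)
    · exact absurd hx (M.B_not_Vg hxb)

lemma noedge_AA {i i' x y} (hii : i ≠ i') (hx : x ∈ M.A i) (hy : y ∈ M.A i') :
    ¬ H.Adj x y := by
  intro hadj
  rcases M.edge_from_A hx hadj with h | h
  · exact M.A_not_Vg hy (M.W_sub i h)
  · exact hii (M.A_unique h hy)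

lemma noedge_AB {i j x y} (hx : x ∈ M.A i) (hy : y ∈ M.B j) : ¬ H.Adj x y := by
  intro hadj
  rcases M.edge_from_A hx hadj with h | h
  · exact M.B_not_Vg hy (M.W_sub i h)
  · exact M.A_not_B h hy

lemma noedge_BB {j j' x y} (hjj : j ≠ j') (hx : x ∈ M.B j) (hy : y ∈ M.B j') :
    ¬ H.Adj x y := by
  intro hadj
  rcases M.edge_from_B hx hadj with h | h
  · exact M.B_not_Vg hy (M.U_sub _ h)
  · exact hjj (M.B_unique h hy)


section Delete

variable {v : V}

/-- complement of the closed neighbourhood of `v`. -/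
def K (H : SimpleGraph V) (v : V) : Set V := {y | y ≠ v ∧ ¬ H.Adj v y}

variable (v) in
/-- surviving cliques -/
def surv (i : Fin d) : Prop := (M.W i ∩ K H v).Nonempty

variable (v) in
/-- clusters that remain "multi" after deletion -/
def multi (j : Fin r) : Prop :=
  v ∉ M.Uc j ∧ ∃ i i' : Fin d, i ≠ i' ∧ M.surv v i ∧ M.surv v i' ∧
    M.W i ⊆ M.Uc j ∧ M.W i' ⊆ M.Uc j

variable (v) in
/-- `B j` gets merged into the whisker set of the unique surviving clique `i` of `U j`. -/
def mrg (i : Fin d) (j : Fin r) : Prop :=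
  v ∉ M.Uc j ∧ M.surv v i ∧ M.W i ⊆ M.Uc j ∧
    ∀ i', i' ≠ i → M.W i' ⊆ M.Uc j → ¬ M.surv v i'

variable (v) in
def deadA (i : Fin d) : Prop := ¬ M.surv v i ∧ v ∉ M.W i

variable (v) in
def deadB (j : Fin r) : Prop := v ∉ M.Uc j ∧ M.Uc j ∩ K H v = ∅

variable (v) in
/-- the left-over vertex decomposable part -/
def Cset : Set V :=
  (⋃ i, ⋃ _ : M.deadA v i, M.A i) ∪ ⋃ j, ⋃ _ : M.deadB v j, M.B j

variable (v) in
lemma mem_Cset {x : V} : x ∈ M.Cset v ↔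
    (∃ i, M.deadA v i ∧ x ∈ M.A i) ∨ ∃ j, M.deadB v j ∧ x ∈ M.B j := by
  simp [Cset, Set.mem_iUnion]

variable (hv : v ∈ M.Vg)
include hv

omit hv in
lemma notK_adj {x : V} (h : H.Adj v x) : x ∉ K H v := fun hK => hK.2 h

lemma W_v_dead {i} (hvi : v ∈ M.W i) : M.W i ∩ K H v = ∅ := by
  ext w
  simp only [Set.mem_inter_iff, Set.mem_empty_iff_false, iff_false, not_and]
  intro hw hK
  rcases eq_or_ne w v with rfl | hne
  · exact hK.1 rfl
  · exact hK.2 (M.W_clique i v hvi w hw hne.symm)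

lemma surv_not_v {i} (hi : M.surv v i) : v ∉ M.W i := by
  intro hvi
  obtain ⟨x, hx⟩ := hi
  rw [M.W_v_dead hv hvi] at hx
  exact hx

lemma A_sub_K {i} (hvi : v ∉ M.W i) : M.A i ⊆ K H v := by
  intro a ha
  refine ⟨fun h => M.A_not_Vg ha (h ▸ hv), fun hadj => ?_⟩
  rcases M.edge_from_Vg hv hadj with h | ⟨k, hk, hak⟩ | ⟨j, -, haj⟩
  · exact M.A_not_Vg ha h
  · exact hvi (M.A_unique hak ha ▸ hk)
  · exact M.A_not_B ha haj

lemma B_sub_K {j} (hvj : v ∉ M.Uc j) : M.B j ⊆ K H v := by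
  intro b hb
  refine ⟨fun h => M.B_not_Vg hb (h ▸ hv), fun hadj => ?_⟩
  rcases M.edge_from_Vg hv hadj with h | ⟨k, -, hak⟩ | ⟨k, hk, hbk⟩
  · exact M.B_not_Vg hb h
  · exact M.A_not_B hak hb
  · exact hvj (M.B_unique hbk hb ▸ hk)

omit hv

lemma v_not_W_of_A_K {i x} (hx : x ∈ M.A i) (hK : x ∈ K H v) : v ∉ M.W i :=
  fun hvi => hK.2 ((M.A_adj i x hx v hvi).symm)

lemma v_not_Uc_of_B_K {j x} (hx : x ∈ M.B j) (hK : x ∈ K H v) : v ∉ M.Uc j :=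
  fun hvj => hK.2 ((M.B_adj j x hx v hvj).symm)

include hv

lemma Cset_sub_K : M.Cset v ⊆ K H v := by
  intro x hx
  rcases (M.mem_Cset v).mp hx with ⟨i, hd, hxa⟩ | ⟨j, hd, hxb⟩
  · exact M.A_sub_K hv hd.2 hxa
  · exact M.B_sub_K hv hd.1 hxb

omit hv

lemma surv_of_mem {i x} (hx : x ∈ M.W i) (hK : x ∈ K H v) : M.surv v i := ⟨x, hx, hK⟩

lemma not_surv_empty {i} (h : ¬ M.surv v i) : M.W i ∩ K H v = ∅ :=
  Set.not_nonempty_iff_eq_empty.mp h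

lemma mrg_not_multi {i j} (h : M.mrg v i j) : ¬ M.multi v j := by
  rintro ⟨-, i1, i2, hne, hs1, hs2, hsub1, hsub2⟩
  rcases eq_or_ne i1 i with rfl | h1
  · exact h.2.2.2 i2 (fun he => hne he.symm) hsub2 hs2
  · exact h.2.2.2 i1 h1 hsub1 hs1

lemma mrg_unique {i j j'} (h : M.mrg v i j) (h' : M.mrg v i j') : j = j' := by
  have := M.W_subU_unique h.2.2.1 h'.2.2.1
  exact Fin.castLE_injective M.hrs this

lemma mrg_exists {j} (hvj : v ∉ M.Uc j) (hm : ¬ M.multi v j)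
    (hne : (M.Uc j ∩ K H v).Nonempty) : ∃ i, M.mrg v i j := by
  obtain ⟨x, hxu, hxK⟩ := hne
  obtain ⟨i, hxi, hsub⟩ := M.U_eq_sUnion hxu
  refine ⟨i, hvj, M.surv_of_mem hxi hxK, hsub, fun i' hne' hsub' hs' => ?_⟩
  exact hm ⟨hvj, i', i, hne', hs', M.surv_of_mem hxi hxK, hsub', hsub⟩

lemma mrg_mem_W {i j x} (h : M.mrg v i j) (hx : x ∈ M.Uc j) (hK : x ∈ K H v) :
    x ∈ M.W i := by
  obtain ⟨k, hxk, hsub⟩ := M.U_eq_sUnion hx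
  rcases eq_or_ne k i with rfl | hne
  · exact hxk
  · exact absurd (M.surv_of_mem hxk hK) (h.2.2.2 k hne hsub)

lemma not_deadB_of_mrg {i j} (h : M.mrg v i j) : ¬ M.deadB v j := by
  rintro ⟨-, hemp⟩
  obtain ⟨x, hx, hK⟩ := h.2.1
  exact absurd (Set.mem_inter (h.2.2.1 hx) hK) (hemp ▸ id)

lemma not_deadB_of_multi {j} (h : M.multi v j) : ¬ M.deadB v j := by
  rintro ⟨-, hemp⟩
  obtain ⟨-, i, -, -, ⟨x, hx, hK⟩, -, hsub, -⟩ := h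
  exact absurd (Set.mem_inter (hsub hx) hK) (hemp ▸ id)

lemma Cset_vd : VD H (M.Cset v) := by
  classical
  have heq : M.Cset v = ⋃ σ ∈ (Finset.univ : Finset (Fin d ⊕ Fin r)),
      Sum.elim (fun i => ⋃ _ : M.deadA v i, M.A i)
               (fun j => ⋃ _ : M.deadB v j, M.B j) σ := by
    ext x
    simp [Cset, Set.mem_iUnion]
  have hsub : ∀ σ : Fin d ⊕ Fin r,
      Sum.elim (fun i => ⋃ _ : M.deadA v i, M.A i)
               (fun j => ⋃ _ : M.deadB v j, M.B j) σ ⊆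
      Sum.elim M.A M.B σ := by
    rintro (i | j) <;> simp only [Sum.elim_inl, Sum.elim_inr] <;>
      exact Set.iUnion_subset fun _ => subset_rfl
  rw [heq]
  refine vd_biUnion H _ _ ?_ ?_ ?_
  · rintro (i | j) -
    · by_cases h : M.deadA v i
      · rw [Sum.elim_inl, Set.iUnion_eq_if, if_pos h]; exact M.A_vd i
      · rw [Sum.elim_inl, Set.iUnion_eq_if, if_neg h]; exact vd_empty H
    · by_cases h : M.deadB v j
      · rw [Sum.elim_inr, Set.iUnion_eq_if, if_pos h]; exact M.B_vd j
      · rw [Sum.elim_inr, Set.iUnion_eq_if, if_neg h]; exact vd_empty H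
  · rintro σ - τ - hστ
    refine Disjoint.mono (hsub σ) (hsub τ) ?_
    rcases σ with i | j <;> rcases τ with i' | j'
    · exact M.A_disj i i' (by rintro rfl; exact hστ rfl)
    · exact M.AB_disj i j'
    · exact (M.AB_disj i' j).symm
    · exact M.B_disj j j' (by rintro rfl; exact hστ rfl)
  · rintro σ - τ - hστ x hx y hy
    have hx' := hsub σ hx
    have hy' := hsub τ hy
    rcases σ with i | j <;> rcases τ with i' | j'
    · exact M.noedge_AA (by rintro rfl; exact hστ rfl) hx' hy'
    · exact M.noedge_AB hx' hy'
    · exact fun h => M.noedge_AB hy' hx' h.symm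
    · exact M.noedge_BB (by rintro rfl; exact hστ rfl) hx' hy'

lemma Cset_noedge : ∀ x ∈ M.Cset v, ∀ y ∈ K H v \ M.Cset v, ¬ H.Adj x y := by
  rintro x hx y ⟨hyK, hyC⟩ hadj
  rcases (M.mem_Cset v).mp hx with ⟨i, hd, hxa⟩ | ⟨j, hd, hxb⟩
  · rcases M.edge_from_A hxa hadj with h | h
    · exact Set.eq_empty_iff_forall_notMem.mp (M.not_surv_empty hd.1) y ⟨h, hyK⟩
    · exact hyC ((M.mem_Cset v).mpr (Or.inl ⟨i, hd, h⟩))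
  · rcases M.edge_from_B hxb hadj with h | h
    · exact Set.eq_empty_iff_forall_notMem.mp hd.2 y ⟨h, hyK⟩
    · exact hyC ((M.mem_Cset v).mpr (Or.inr ⟨j, hd, h⟩))

variable (v) in
/-- cliques that get their own singleton cluster -/
def sngl (i : Fin d) : Prop :=
  M.surv v i ∧ ¬ ∃ j, M.multi v j ∧ M.W i ⊆ M.Uc j

variable (v) in
noncomputable def dN : ℕ := Nat.card {i : Fin d // M.surv v i}
variable (v) in
noncomputable def rN : ℕ := Nat.card {j : Fin r // M.multi v j}
variable (v) in
noncomputable def tN : ℕ := Nat.card {i : Fin d // M.sngl v i}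

variable (v) in
noncomputable def eA : Fin (M.dN v) ≃ {i : Fin d // M.surv v i} :=
  (Finite.equivFin _).symm
variable (v) in
noncomputable def eM : Fin (M.rN v) ≃ {j : Fin r // M.multi v j} :=
  (Finite.equivFin _).symm
variable (v) in
noncomputable def eS : Fin (M.tN v) ≃ {i : Fin d // M.sngl v i} :=
  (Finite.equivFin _).symm

variable (v) in
noncomputable def W' : Fin (M.dN v) → Set V := fun i => M.W (M.eA v i) ∩ K H v

variable (v) in
noncomputable def A' : Fin (M.dN v) → Set V := fun i =>
  M.A (M.eA v i) ∪ ⋃ j, ⋃ _ : M.mrg v (M.eA v i) j, M.B j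

variable (v) in
noncomputable def B' : Fin (M.rN v) → Set V := fun j => M.B (M.eM v j)

variable (v) in
noncomputable def Usum : Fin (M.rN v) ⊕ Fin (M.tN v) → Set V :=
  Sum.elim (fun j => M.Uc (M.eM v j) ∩ K H v) (fun i => M.W (M.eS v i) ∩ K H v)

variable (v) in
noncomputable def U' : Fin (M.rN v + M.tN v) → Set V := fun k =>
  M.Usum v (finSumFinEquiv.symm k)

lemma eA_ne {i j : Fin (M.dN v)} (h : i ≠ j) :
    ((M.eA v i : Fin d)) ≠ (M.eA v j : Fin d) :=
  fun hval => h ((M.eA v).injective (Subtype.ext hval))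

lemma eM_ne {i j : Fin (M.rN v)} (h : i ≠ j) :
    ((M.eM v i : Fin r)) ≠ (M.eM v j : Fin r) :=
  fun hval => h ((M.eM v).injective (Subtype.ext hval))

lemma eS_ne {i j : Fin (M.tN v)} (h : i ≠ j) :
    ((M.eS v i : Fin d)) ≠ (M.eS v j : Fin d) :=
  fun hval => h ((M.eS v).injective (Subtype.ext hval))

lemma W'_symm (i : Fin d) (hs : M.surv v i) :
    M.W' v ((M.eA v).symm ⟨i, hs⟩) = M.W i ∩ K H v := by
  simp [W']

lemma A'_mem {i : Fin (M.dN v)} {x : V} :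
    x ∈ M.A' v i ↔ x ∈ M.A (M.eA v i) ∨ ∃ j, M.mrg v (M.eA v i) j ∧ x ∈ M.B j := by
  simp [A', Set.mem_iUnion]

lemma A'_symm_mem_left {i : Fin d} (hs : M.surv v i) {x : V} (hx : x ∈ M.A i) :
    x ∈ M.A' v ((M.eA v).symm ⟨i, hs⟩) := by
  rw [A'_mem]
  left
  rwa [Equiv.apply_symm_apply]

lemma A'_symm_mem_right {i : Fin d} {j : Fin r} (hm : M.mrg v i j) {x : V}
    (hx : x ∈ M.B j) : x ∈ M.A' v ((M.eA v).symm ⟨i, hm.2.1⟩) := by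
  rw [A'_mem]
  right
  refine ⟨j, ?_, hx⟩
  rwa [Equiv.apply_symm_apply]

lemma B'_symm (j : Fin r) (hm : M.multi v j) :
    M.B' v ((M.eM v).symm ⟨j, hm⟩) = M.B j := by
  simp [B']

lemma U'_castLE (j : Fin (M.rN v)) :
    M.U' v (Fin.castLE (Nat.le_add_right _ _) j) = M.Uc (M.eM v j) ∩ K H v := by
  have h1 : (Fin.castLE (Nat.le_add_right (M.rN v) (M.tN v)) j)
      = Fin.castAdd (M.tN v) j := rfl
  rw [U', h1, finSumFinEquiv_symm_apply_castAdd]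
  rfl

lemma mrg_i_unique {i i' : Fin d} {j : Fin r} (h : M.mrg v i j) (h' : M.mrg v i' j) :
    i = i' := by
  by_contra hne
  exact h'.2.2.2 i hne h.2.2.1 h.2.1

variable (v) in
lemma W'_ne (i : Fin (M.dN v)) : (M.W' v i).Nonempty := (M.eA v i).2

variable (v) in
lemma W'_sub (i : Fin (M.dN v)) : M.W' v i ⊆ M.Vg ∩ K H v :=
  fun x hx => ⟨M.W_sub _ hx.1, hx.2⟩

variable (v) in
lemma W'_disj (i j : Fin (M.dN v)) (h : i ≠ j) : Disjoint (M.W' v i) (M.W' v j) :=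
  (M.W_disj _ _ (M.eA_ne h)).mono Set.inter_subset_left Set.inter_subset_left

variable (v) in
lemma W'_cover : M.Vg ∩ K H v ⊆ ⋃ i, M.W' v i := by
  rintro x ⟨hxV, hxK⟩
  obtain ⟨i, hxi⟩ := Set.mem_iUnion.mp (M.W_cover hxV)
  refine Set.mem_iUnion.mpr ⟨(M.eA v).symm ⟨i, ⟨x, hxi, hxK⟩⟩, ?_⟩
  simp only [W', Equiv.apply_symm_apply]
  exact ⟨hxi, hxK⟩

variable (v) in
lemma W'_clique (i : Fin (M.dN v)) :
    ∀ x ∈ M.W' v i, ∀ y ∈ M.W' v i, x ≠ y → H.Adj x y :=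
  fun x hx y hy => M.W_clique _ x hx.1 y hy.1

variable (v) in
lemma Usum_ne (σ : Fin (M.rN v) ⊕ Fin (M.tN v)) : (M.Usum v σ).Nonempty := by
  rcases σ with j | i
  · simp only [Usum, Sum.elim_inl]
    obtain ⟨hvj, i1, i2, -, hs1, -, hsub1, -⟩ := (M.eM v j).2
    obtain ⟨x, hx, hK⟩ := hs1
    exact ⟨x, hsub1 hx, hK⟩
  · simp only [Usum, Sum.elim_inr]
    exact (M.eS v i).2.1

variable (v) in
lemma Usum_sub (σ : Fin (M.rN v) ⊕ Fin (M.tN v)) : M.Usum v σ ⊆ M.Vg ∩ K H v := by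
  rcases σ with j | i
  · exact fun x hx => ⟨M.U_sub _ hx.1, hx.2⟩
  · exact fun x hx => ⟨M.W_sub _ hx.1, hx.2⟩

variable (v) in
lemma Usum_disj (σ τ : Fin (M.rN v) ⊕ Fin (M.tN v)) (h : σ ≠ τ) :
    Disjoint (M.Usum v σ) (M.Usum v τ) := by
  rcases σ with j | i <;> rcases τ with j' | i'
  · have hjj : j ≠ j' := by rintro rfl; exact h rfl
    refine ((M.U_disj _ _ ?_).mono Set.inter_subset_left Set.inter_subset_left :
      Disjoint (M.Uc (M.eM v j) ∩ K H v) (M.Uc (M.eM v j') ∩ K H v))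
    exact fun e => M.eM_ne hjj (Fin.castLE_injective _ e)
  · refine Set.disjoint_left.mpr ?_
    rintro x ⟨hxu, -⟩ ⟨hxw, -⟩
    exact (M.eS v i').2.2 ⟨M.eM v j, (M.eM v j).2, M.W_subU_of_mem hxw hxu⟩
  · refine Set.disjoint_right.mpr ?_
    rintro x ⟨hxu, -⟩ ⟨hxw, -⟩
    exact (M.eS v i).2.2 ⟨M.eM v j', (M.eM v j').2, M.W_subU_of_mem hxw hxu⟩
  · have hii : i ≠ i' := by rintro rfl; exact h rfl
    exact (M.W_disj _ _ (M.eS_ne hii)).mono Set.inter_subset_left Set.inter_subset_left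

variable (v) in
lemma Usum_cover {x : V} (hx : x ∈ M.Vg ∩ K H v) : ∃ σ, x ∈ M.Usum v σ := by
  obtain ⟨hxV, hxK⟩ := hx
  obtain ⟨i, hxi⟩ := Set.mem_iUnion.mp (M.W_cover hxV)
  have hs : M.surv v i := ⟨x, hxi, hxK⟩
  by_cases h : ∃ j, M.multi v j ∧ M.W i ⊆ M.Uc j
  · obtain ⟨j, hm, hsub⟩ := h
    refine ⟨Sum.inl ((M.eM v).symm ⟨j, hm⟩), ?_⟩
    simp only [Usum, Sum.elim_inl, Equiv.apply_symm_apply]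
    exact ⟨hsub hxi, hxK⟩
  · refine ⟨Sum.inr ((M.eS v).symm ⟨i, hs, h⟩), ?_⟩
    simp only [Usum, Sum.elim_inr, Equiv.apply_symm_apply]
    exact ⟨hxi, hxK⟩

variable (v) in
lemma U'_ne (k : Fin (M.rN v + M.tN v)) : (M.U' v k).Nonempty := M.Usum_ne v _

variable (v) in
lemma U'_sub (k : Fin (M.rN v + M.tN v)) : M.U' v k ⊆ M.Vg ∩ K H v := M.Usum_sub v _

variable (v) in
lemma U'_disj (k k' : Fin (M.rN v + M.tN v)) (h : k ≠ k') :
    Disjoint (M.U' v k) (M.U' v k') :=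
  M.Usum_disj v _ _ (fun e => h (finSumFinEquiv.symm.injective e))

variable (v) in
lemma U'_cover : M.Vg ∩ K H v ⊆ ⋃ k, M.U' v k := by
  intro x hx
  obtain ⟨σ, hσ⟩ := M.Usum_cover v hx
  refine Set.mem_iUnion.mpr ⟨finSumFinEquiv σ, ?_⟩
  simp only [U', Equiv.symm_apply_apply]
  exact hσ

variable (v) in
lemma W'_in_U' (i : Fin (M.dN v)) : ∃ k, M.W' v i ⊆ M.U' v k := by
  by_cases h : ∃ j, M.multi v j ∧ M.W (M.eA v i) ⊆ M.Uc j
  · obtain ⟨j, hm, hsub⟩ := h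
    refine ⟨finSumFinEquiv (Sum.inl ((M.eM v).symm ⟨j, hm⟩)), ?_⟩
    simp only [U', Equiv.symm_apply_apply, Usum, Sum.elim_inl, Equiv.apply_symm_apply]
    exact fun x hx => ⟨hsub hx.1, hx.2⟩
  · refine ⟨finSumFinEquiv (Sum.inr ((M.eS v).symm ⟨(M.eA v i : Fin d), ⟨(M.eA v i).2, h⟩⟩)), ?_⟩
    simp only [U', Equiv.symm_apply_apply, Usum, Sum.elim_inr, Equiv.apply_symm_apply, W']
    exact subset_rfl

variable (v) in
lemma cluster_indep' (i i' : Fin (M.dN v)) (hne : i ≠ i') (k : Fin (M.rN v + M.tN v))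
    (h1 : M.W' v i ⊆ M.U' v k) (h2 : M.W' v i' ⊆ M.U' v k) :
    ∀ x ∈ M.W' v i, ∀ y ∈ M.W' v i', ¬ H.Adj x y := by
  simp only [U'] at h1 h2
  rcases hσ : finSumFinEquiv.symm k with j | ℓ <;> rw [hσ] at h1 h2 <;>
    simp only [Usum, Sum.elim_inl, Sum.elim_inr] at h1 h2
  · obtain ⟨x0, hx0⟩ := M.W'_ne v i
    obtain ⟨y0, hy0⟩ := M.W'_ne v i'
    have hsub1 : M.W (M.eA v i) ⊆ M.Uc (M.eM v j) := M.W_subU_of_mem hx0.1 (h1 hx0).1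
    have hsub2 : M.W (M.eA v i') ⊆ M.Uc (M.eM v j) := M.W_subU_of_mem hy0.1 (h2 hy0).1
    intro x hx y hy
    exact M.cluster_indep _ _ (M.eA_ne hne) _ hsub1 hsub2 x hx.1 y hy.1
  · obtain ⟨x0, hx0⟩ := M.W'_ne v i
    obtain ⟨y0, hy0⟩ := M.W'_ne v i'
    have he1 : (M.eA v i : Fin d) = (M.eS v ℓ : Fin d) := M.W_unique hx0.1 (h1 hx0).1
    have he2 : (M.eA v i' : Fin d) = (M.eS v ℓ : Fin d) := M.W_unique hy0.1 (h2 hy0).1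
    exact (hne ((M.eA v).injective (Subtype.ext (he1.trans he2.symm)))).elim

variable (v) in
lemma U'_multi (j : Fin (M.rN v)) : ∃ i i' : Fin (M.dN v), i ≠ i' ∧
    M.W' v i ⊆ M.U' v (Fin.castLE (Nat.le_add_right _ _) j) ∧
    M.W' v i' ⊆ M.U' v (Fin.castLE (Nat.le_add_right _ _) j) := by
  obtain ⟨hvj, i1, i2, hne, hs1, hs2, hsub1, hsub2⟩ := (M.eM v j).2
  refine ⟨(M.eA v).symm ⟨i1, hs1⟩, (M.eA v).symm ⟨i2, hs2⟩, ?_, ?_, ?_⟩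
  · intro e
    apply hne
    have := congrArg (fun z => ((M.eA v) z : Fin d)) e
    simpa using this
  · rw [M.U'_castLE, M.W'_symm]
    exact fun x hx => ⟨hsub1 hx.1, hx.2⟩
  · rw [M.U'_castLE, M.W'_symm]
    exact fun x hx => ⟨hsub2 hx.1, hx.2⟩

variable (v) in
lemma U'_single (k : Fin (M.rN v + M.tN v)) (hk : M.rN v ≤ (k : ℕ)) :
    ∃ i, M.U' v k = M.W' v i := by
  have hk2 : (k : ℕ) - M.rN v < M.tN v := by
    have := k.isLt
    omega
  set ℓ : Fin (M.tN v) := ⟨(k : ℕ) - M.rN v, hk2⟩ with hℓ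
  have he : k = Fin.natAdd (M.rN v) ℓ := by
    apply Fin.ext
    simp only [Fin.natAdd, hℓ]
    omega
  refine ⟨(M.eA v).symm ⟨(M.eS v ℓ : Fin d), (M.eS v ℓ).2.1⟩, ?_⟩
  rw [M.W'_symm, he]
  simp only [U', finSumFinEquiv_symm_apply_natAdd, Usum, Sum.elim_inr]

variable (v) in
lemma A'_ne (i : Fin (M.dN v)) : (M.A' v i).Nonempty :=
  (M.A_ne _).mono Set.subset_union_left

lemma A'_eq_of_mrg {i : Fin (M.dN v)} {j : Fin r} (h : M.mrg v (M.eA v i) j) :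
    M.A' v i = M.A (M.eA v i) ∪ M.B j := by
  ext x
  rw [Set.mem_union, M.A'_mem]
  constructor
  · rintro (hx | ⟨j', hj', hx⟩)
    · exact Or.inl hx
    · rw [M.mrg_unique hj' h] at hx
      exact Or.inr hx
  · rintro (hx | hx)
    · exact Or.inl hx
    · exact Or.inr ⟨j, h, hx⟩

lemma A'_eq_no {i : Fin (M.dN v)} (h : ¬ ∃ j, M.mrg v (M.eA v i) j) :
    M.A' v i = M.A (M.eA v i) := by
  ext x
  rw [M.A'_mem]
  constructor
  · rintro (hx | ⟨j, hj, -⟩)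
    · exact hx
    · exact absurd ⟨j, hj⟩ h
  · exact Or.inl

variable (v) in
lemma A'_vd (i : Fin (M.dN v)) : VD H (M.A' v i) := by
  by_cases h : ∃ j, M.mrg v (M.eA v i) j
  · obtain ⟨j, hj⟩ := h
    rw [M.A'_eq_of_mrg hj]
    exact vd_union H (M.A_vd _) (M.B_vd _) (M.AB_disj _ _)
      (fun x hx y hy => M.noedge_AB hx hy)
  · rw [M.A'_eq_no h]
    exact M.A_vd _

include hv in
variable (v) in
lemma A'_sub_K (i : Fin (M.dN v)) : M.A' v i ⊆ K H v := by
  intro x hx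
  rcases M.A'_mem.mp hx with h | ⟨j, hj, h⟩
  · exact M.A_sub_K hv (M.surv_not_v hv (M.eA v i).2) h
  · exact M.B_sub_K hv hj.1 h

variable (v) in
lemma A'_not_C (i : Fin (M.dN v)) : ∀ x ∈ M.A' v i, x ∉ M.Cset v := by
  intro x hx hC
  rcases M.A'_mem.mp hx with h | ⟨j, hj, h⟩ <;>
    rcases (M.mem_Cset v).mp hC with ⟨k, hd, hk⟩ | ⟨k, hd, hk⟩
  · exact hd.1 ((M.A_unique hk h) ▸ (M.eA v i).2)
  · exact M.A_not_B h hk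
  · exact M.A_not_B hk h
  · exact M.not_deadB_of_mrg hj ((M.B_unique hk h) ▸ hd)

include hv in
variable (v) in
lemma B'_sub_K (j : Fin (M.rN v)) : M.B' v j ⊆ K H v := by
  simp only [B']
  exact M.B_sub_K hv (M.eM v j).2.1

variable (v) in
lemma B'_not_C (j : Fin (M.rN v)) : ∀ x ∈ M.B' v j, x ∉ M.Cset v := by
  intro x hx hC
  simp only [B'] at hx
  rcases (M.mem_Cset v).mp hC with ⟨k, hd, hk⟩ | ⟨k, hd, hk⟩
  · exact M.A_not_B hk hx
  · exact M.not_deadB_of_multi (M.eM v j).2 (M.B_unique hk hx ▸ hd)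

variable (v) in
lemma Vg_not_C : ∀ x ∈ M.Vg, x ∉ M.Cset v := by
  intro x hx hC
  rcases (M.mem_Cset v).mp hC with ⟨k, -, hk⟩ | ⟨k, -, hk⟩
  · exact M.A_not_Vg hk hx
  · exact M.B_not_Vg hk hx

variable (v) in
lemma A'_disj_Vg (i : Fin (M.dN v)) : Disjoint (M.A' v i) (M.Vg ∩ K H v) := by
  refine Set.disjoint_left.mpr ?_
  intro x hx hx'
  rcases M.A'_mem.mp hx with h | ⟨j, -, h⟩
  · exact M.A_not_Vg h hx'.1
  · exact M.B_not_Vg h hx'.1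

variable (v) in
lemma B'_disj_Vg (j : Fin (M.rN v)) : Disjoint (M.B' v j) (M.Vg ∩ K H v) := by
  refine Set.disjoint_left.mpr ?_
  intro x hx hx'
  exact M.B_not_Vg hx hx'.1

variable (v) in
lemma A'_disj (i i' : Fin (M.dN v)) (h : i ≠ i') : Disjoint (M.A' v i) (M.A' v i') := by
  refine Set.disjoint_left.mpr ?_
  intro x hx hx'
  rcases M.A'_mem.mp hx with h1 | ⟨j1, hj1, h1⟩ <;>
    rcases M.A'_mem.mp hx' with h2 | ⟨j2, hj2, h2⟩
  · exact M.eA_ne h (M.A_unique h1 h2)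
  · exact M.A_not_B h1 h2
  · exact M.A_not_B h2 h1
  · rw [M.B_unique h1 h2] at hj1
    exact M.eA_ne h (M.mrg_i_unique hj1 hj2)

variable (v) in
lemma B'_disj (j j' : Fin (M.rN v)) (h : j ≠ j') : Disjoint (M.B' v j) (M.B' v j') := by
  simp only [B']
  exact M.B_disj _ _ (M.eM_ne h)

variable (v) in
lemma A'B'_disj (i : Fin (M.dN v)) (j : Fin (M.rN v)) :
    Disjoint (M.A' v i) (M.B' v j) := by
  refine Set.disjoint_left.mpr ?_
  intro x hx hx'
  simp only [B'] at hx'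
  rcases M.A'_mem.mp hx with h | ⟨k, hk, h⟩
  · exact M.A_not_B h hx'
  · rw [M.B_unique h hx'] at hk
    exact M.mrg_not_multi hk (M.eM v j).2

include hv in
variable (v) in
lemma total' : K H v \ M.Cset v =
    (M.Vg ∩ K H v) ∪ (⋃ i, M.A' v i) ∪ (⋃ j, M.B' v j) := by
  ext x
  constructor
  · rintro ⟨hxK, hxC⟩
    rcases M.mem_cases x with h | ⟨i, h⟩ | ⟨j, h⟩
    · exact Or.inl (Or.inl ⟨h, hxK⟩)
    · have hvW := M.v_not_W_of_A_K h hxK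
      by_cases hs : M.surv v i
      · exact Or.inl (Or.inr (Set.mem_iUnion.mpr
          ⟨(M.eA v).symm ⟨i, hs⟩, M.A'_symm_mem_left hs h⟩))
      · exact absurd ((M.mem_Cset v).mpr (Or.inl ⟨i, ⟨hs, hvW⟩, h⟩)) hxC
    · have hvU := M.v_not_Uc_of_B_K h hxK
      by_cases hm : M.multi v j
      · refine Or.inr (Set.mem_iUnion.mpr ⟨(M.eM v).symm ⟨j, hm⟩, ?_⟩)
        rw [M.B'_symm]
        exact h
      · by_cases hdead : M.Uc j ∩ K H v = ∅
        · exact absurd ((M.mem_Cset v).mpr (Or.inr ⟨j, ⟨hvU, hdead⟩, h⟩)) hxC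
        · obtain ⟨i, hmrg⟩ := M.mrg_exists hvU hm (Set.nonempty_iff_ne_empty.mpr hdead)
          exact Or.inl (Or.inr (Set.mem_iUnion.mpr
            ⟨(M.eA v).symm ⟨i, hmrg.2.1⟩, M.A'_symm_mem_right hmrg h⟩))
  · rintro ((⟨hxV, hxK⟩ | hx) | hx)
    · exact ⟨hxK, M.Vg_not_C v x hxV⟩
    · obtain ⟨i, hi⟩ := Set.mem_iUnion.mp hx
      exact ⟨M.A'_sub_K v hv i hi, M.A'_not_C v i x hi⟩
    · obtain ⟨j, hj⟩ := Set.mem_iUnion.mp hx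
      exact ⟨M.B'_sub_K v hv j hj, M.B'_not_C v j x hj⟩

variable (v) in
lemma A'_adj (i : Fin (M.dN v)) : ∀ a ∈ M.A' v i, ∀ w ∈ M.W' v i, H.Adj a w := by
  intro a ha w hw
  rcases M.A'_mem.mp ha with h | ⟨j, hj, h⟩
  · exact M.A_adj _ a h w hw.1
  · exact M.B_adj j a h w (hj.2.2.1 hw.1)

variable (v) in
lemma B'_adj (j : Fin (M.rN v)) :
    ∀ b ∈ M.B' v j, ∀ u ∈ M.U' v (Fin.castLE (Nat.le_add_right _ _) j), H.Adj b u := by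
  intro b hb u hu
  rw [M.U'_castLE] at hu
  simp only [B'] at hb
  exact M.B_adj _ b hb u hu.1

variable (v) in
lemma no_other' : ∀ x ∈ K H v \ M.Cset v, ∀ y ∈ K H v \ M.Cset v, H.Adj x y →
    (x ∈ M.Vg ∩ K H v ∧ y ∈ M.Vg ∩ K H v) ∨
    (∃ i, (x ∈ M.A' v i ∧ y ∈ M.W' v i) ∨ (y ∈ M.A' v i ∧ x ∈ M.W' v i) ∨
      (x ∈ M.A' v i ∧ y ∈ M.A' v i)) ∨
    (∃ j, (x ∈ M.B' v j ∧ y ∈ M.U' v (Fin.castLE (Nat.le_add_right _ _) j)) ∨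
      (y ∈ M.B' v j ∧ x ∈ M.U' v (Fin.castLE (Nat.le_add_right _ _) j)) ∨
      (x ∈ M.B' v j ∧ y ∈ M.B' v j)) := by
  rintro x ⟨hxK, hxC⟩ y ⟨hyK, hyC⟩ hadj
  rcases M.mem_cases x with hx | ⟨i, hx⟩ | ⟨j, hx⟩
  · rcases M.edge_from_Vg hx hadj with hy | ⟨i, hxw, hya⟩ | ⟨j, hxu, hyb⟩
    · exact Or.inl ⟨⟨hx, hxK⟩, ⟨hy, hyK⟩⟩
    · have hs : M.surv v i := ⟨x, hxw, hxK⟩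
      refine Or.inr (Or.inl ⟨(M.eA v).symm ⟨i, hs⟩,
        Or.inr (Or.inl ⟨M.A'_symm_mem_left hs hya, ?_⟩)⟩)
      rw [M.W'_symm]
      exact ⟨hxw, hxK⟩
    · have hvU : v ∉ M.Uc j := M.v_not_Uc_of_B_K hyb hyK
      by_cases hm : M.multi v j
      · refine Or.inr (Or.inr ⟨(M.eM v).symm ⟨j, hm⟩, Or.inr (Or.inl ⟨?_, ?_⟩)⟩)
        · rw [M.B'_symm]
          exact hyb
        · rw [M.U'_castLE, Equiv.apply_symm_apply]
          exact ⟨hxu, hxK⟩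
      · obtain ⟨i, hmrg⟩ := M.mrg_exists hvU hm ⟨x, hxu, hxK⟩
        refine Or.inr (Or.inl ⟨(M.eA v).symm ⟨i, hmrg.2.1⟩,
          Or.inr (Or.inl ⟨M.A'_symm_mem_right hmrg hyb, ?_⟩)⟩)
        rw [M.W'_symm]
        exact ⟨M.mrg_mem_W hmrg hxu hxK, hxK⟩
  · have hvW := M.v_not_W_of_A_K hx hxK
    have hs : M.surv v i := by
      by_contra hns
      exact hxC ((M.mem_Cset v).mpr (Or.inl ⟨i, ⟨hns, hvW⟩, hx⟩))
    rcases M.edge_from_A hx hadj with hy | hy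
    · refine Or.inr (Or.inl ⟨(M.eA v).symm ⟨i, hs⟩,
        Or.inl ⟨M.A'_symm_mem_left hs hx, ?_⟩⟩)
      rw [M.W'_symm]
      exact ⟨hy, hyK⟩
    · exact Or.inr (Or.inl ⟨(M.eA v).symm ⟨i, hs⟩,
        Or.inr (Or.inr ⟨M.A'_symm_mem_left hs hx, M.A'_symm_mem_left hs hy⟩)⟩)
  · have hvU := M.v_not_Uc_of_B_K hx hxK
    have hnd : ¬ M.deadB v j := fun hd => hxC ((M.mem_Cset v).mpr (Or.inr ⟨j, hd, hx⟩))
    have hne : (M.Uc j ∩ K H v).Nonempty := by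
      rcases Set.eq_empty_or_nonempty (M.Uc j ∩ K H v) with he | hne
      · exact absurd ⟨hvU, he⟩ hnd
      · exact hne
    rcases M.edge_from_B hx hadj with hy | hy
    · by_cases hm : M.multi v j
      · refine Or.inr (Or.inr ⟨(M.eM v).symm ⟨j, hm⟩, Or.inl ⟨?_, ?_⟩⟩)
        · rw [M.B'_symm]
          exact hx
        · rw [M.U'_castLE, Equiv.apply_symm_apply]
          exact ⟨hy, hyK⟩
      · obtain ⟨i, hmrg⟩ := M.mrg_exists hvU hm hne
        refine Or.inr (Or.inl ⟨(M.eA v).symm ⟨i, hmrg.2.1⟩,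
          Or.inl ⟨M.A'_symm_mem_right hmrg hx, ?_⟩⟩)
        rw [M.W'_symm]
        exact ⟨M.mrg_mem_W hmrg hy hyK, hyK⟩
    · by_cases hm : M.multi v j
      · refine Or.inr (Or.inr ⟨(M.eM v).symm ⟨j, hm⟩, Or.inr (Or.inr ⟨?_, ?_⟩)⟩)
        · rw [M.B'_symm]
          exact hx
        · rw [M.B'_symm]
          exact hy
      · obtain ⟨i, hmrg⟩ := M.mrg_exists hvU hm hne
        exact Or.inr (Or.inl ⟨(M.eA v).symm ⟨i, hmrg.2.1⟩, Or.inr (Or.inr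
          ⟨M.A'_symm_mem_right hmrg hx, M.A'_symm_mem_right hmrg hy⟩)⟩)


end Delete

end MccWhiskered

/-- **Lemma (link).** For any vertex `v` of the base graph `G`, there exist a vertex
clique-partition `π₂` of `G \ N_G[v]` and a clique cluster-partition based on `π₂`
such that the induced subgraph `G^{md} \ N_{G^{md}}[v]` is (isomorphic to) the
disjoint union of a multiple clique cluster-whiskered graph `(G \ N_G[v])^{md}`,
built on the base graph `G \ N_G[v]`, and a possibly empty vertex decomposable graph
`C` with no edges to the rest.  Here `{y | y ≠ v ∧ ¬ H.Adj v y}` is the complement of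
the closed neighbourhood `N_{G^{md}}[v]`. -/
theorem mccWhiskered_delete_closedNbhd [Fintype V]
    (H : SimpleGraph V) (d s r : ℕ) (M : MccWhiskered H Set.univ d s r)
    (v : V) (hv : v ∈ M.Vg) :
    ∃ (d' s' r' : ℕ) (C : Set V), C ⊆ {y | y ≠ v ∧ ¬ H.Adj v y} ∧ VD H C ∧
      (∀ x ∈ C, ∀ y ∈ {y | y ≠ v ∧ ¬ H.Adj v y} \ C, ¬ H.Adj x y) ∧
      ∃ M' : MccWhiskered H ({y | y ≠ v ∧ ¬ H.Adj v y} \ C) d' s' r',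
        M'.Vg = {y ∈ M.Vg | y ≠ v ∧ ¬ H.Adj v y} := by
  classical
  refine ⟨M.dN v, M.rN v + M.tN v, M.rN v, M.Cset v, M.Cset_sub_K hv, M.Cset_vd,
    M.Cset_noedge, ⟨?_, ?_⟩⟩
  · exact {
      hrs := Nat.le_add_right _ _
      Vg := M.Vg ∩ MccWhiskered.K H v
      W := M.W' v
      U := M.U' v
      W_ne := M.W'_ne v
      W_sub := M.W'_sub v
      W_disj := M.W'_disj v
      W_cover := M.W'_cover v
      W_clique := M.W'_clique v
      U_ne := M.U'_ne v
      U_sub := M.U'_sub v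
      U_disj := M.U'_disj v
      U_cover := M.U'_cover v
      W_in_U := M.W'_in_U' v
      cluster_indep := M.cluster_indep' v
      U_multi := M.U'_multi v
      U_single := M.U'_single v
      A := M.A' v
      B := M.B' v
      A_ne := M.A'_ne v
      B_ne := fun j => M.B_ne _
      A_disj_Vg := M.A'_disj_Vg v
      B_disj_Vg := M.B'_disj_Vg v
      A_disj := M.A'_disj v
      B_disj := M.B'_disj v
      AB_disj := M.A'B'_disj v
      total := M.total' v hv
      A_adj := M.A'_adj v
      B_adj := M.B'_adj v
      no_other_edges := M.no_other' v
      A_vd := M.A'_vd v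
      B_vd := fun j => M.B_vd _
    }
  · rfl

end Paper
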